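/- If the edgewise subdivision sd X of a simplicial set X is Segal, then the lower décalage dec_⊥X is Segal. (This follows because for each n ≥ 1 the Segal square of dec_⊥X is a retract, via the simplicial map dec_⊥X → sd X given in degree n by s_0^n : X_{n+1} → X_{2n+1} and the retraction given by iterated faces d_1^n and d_0 ∘ d_2^{n-1}, of the corresponding Segal square of sd X, and pullbacks of sets are stable under retracts.) -/

import Mathlib

open CategoryTheory Simplicial

universe u

/-- A commuting square of sets (top `f`, left `g`, right `h`, bottom `k`) is a pullback
if the canonical map to the fiber product is a bijection. -/
def IsPullbackSet {A B C D : Type u} (f : A → B) (g : A → C) (h : B → D) (k : C → D) : Prop :=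
  (∀ a, h (f a) = k (g a)) ∧ ∀ (b : B) (c : C), h b = k c → ∃! a : A, f a = b ∧ g a = c

/-- The Segal condition for the edgewise subdivision `sd X` (which has `(sd X)_n = X_{2n+1}`,
with `i`-th face `d_{n-i} ∘ d_{n+i+1} : X_{2n+1} → X_{2n-1}` for `0 ≤ i ≤ n`), stated
explicitly in terms of `X`: for every `n ≥ 1` (here `n = m + 1`), the Segal square of `sd X`
with top `d_0`, left `d_{n+1}`, right `d_n`, bottom `d_0` is the square with
top `d_{m+2} ∘ d_{m+3} : X_{2m+5} → X_{2m+3}`, left `d_0 ∘ d_{2m+5} : X_{2m+5} → X_{2m+3}`,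
right `d_0 ∘ d_{2m+3} : X_{2m+3} → X_{2m+1}`, bottom `d_{m+1} ∘ d_{m+2}`. -/
def SdSegal (X : SSet.{u}) : Prop :=
  ∀ m : ℕ,
    IsPullbackSet
      (fun x => X.δ (⟨m + 2, by omega⟩ : Fin (2 * m + 5))
        (X.δ (⟨m + 3, by omega⟩ : Fin (2 * m + 6)) x))
      (fun x => X.δ (⟨0, by omega⟩ : Fin (2 * m + 5))
        (X.δ (⟨2 * m + 5, by omega⟩ : Fin (2 * m + 6)) x))
      (fun x => X.δ (⟨0, by omega⟩ : Fin (2 * m + 3))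
        (X.δ (⟨2 * m + 3, by omega⟩ : Fin (2 * m + 4)) x))
      (fun x => X.δ (⟨m + 1, by omega⟩ : Fin (2 * m + 3))
        (X.δ (⟨m + 2, by omega⟩ : Fin (2 * m + 4)) x))

/-- The Segal condition for the lower décalage `dec⊥ X` (which has `(dec⊥ X)_n = X_{n+1}`,
with `k`-th face `d_{k+1} : X_{n+1} → X_n` for `0 ≤ k ≤ n`), stated explicitly in terms
of `X`. -/
def LowerDecSegal (X : SSet.{u}) : Prop :=
  ∀ m : ℕ,
    IsPullbackSet
      (fun x => X.δ (1 : Fin (m + 4)) x)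
      (fun x => X.δ (⟨m + 3, by omega⟩ : Fin (m + 4)) x)
      (fun x => X.δ (⟨m + 2, by omega⟩ : Fin (m + 3)) x)
      (fun x => X.δ (1 : Fin (m + 3)) x)

/-!
For each `n`, the maps `s_0^n : X_{n+1} → X_{2n+1}` (the image under `X` of the surjection
`⦋2n+1⦌ ⟶ ⦋n+1⦌`, `i ↦ i - n`) commute with the outer faces, so they carry the Segal square of
`dec⊥ X` into that of `sd X`. In the other direction, the images of the injections keeping the
vertex `1` (resp. `0`) and the last `n + 1` vertices, i.e. `d_0 ∘ d_2^{n-1}` (resp. `d_1^n`), are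
left inverse to `s_0^n` and commute with the relevant faces. The Segal square of `dec⊥ X` is thus
a retract of that of `sd X`, and a retract of a pullback square of sets is a pullback.
-/

theorem IsPullbackSet.of_retract {A B C D A' B' C' D' : Type u}
    {f : A → B} {g : A → C} {h : B → D} {k : C → D}
    {f' : A' → B'} {g' : A' → C'} {h' : B' → D'} {k' : C' → D'}
    (hP : IsPullbackSet f' g' h' k')
    {iA : A → A'} {iB : B → B'} {iC : C → C'} {iD : D → D'}
    {rA : A' → A} {rB : B' → B} {rC : C' → C} {rD : D' → D}
    (hf : ∀ a, f' (iA a) = iB (f a)) (hg : ∀ a, g' (iA a) = iC (g a))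
    (hh : ∀ b, h' (iB b) = iD (h b)) (hk : ∀ c, k' (iC c) = iD (k c))
    (hrf : ∀ a', f (rA a') = rB (f' a')) (hrg : ∀ a', g (rA a') = rC (g' a'))
    (hA : Function.LeftInverse rA iA) (hB : Function.LeftInverse rB iB)
    (hC : Function.LeftInverse rC iC) (hD : Function.LeftInverse rD iD) :
    IsPullbackSet f g h k := by
  refine ⟨fun a => hD.injective ?_, fun b c hbc => ?_⟩
  · rw [← hh, ← hf, hP.1, hg, hk]
  obtain ⟨a', ⟨hb, hc⟩, huniq⟩ := hP.2 (iB b) (iC c) (by rw [hh, hk, hbc])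
  refine ⟨rA a', ⟨by rw [hrf, hb, hB], by rw [hrg, hc, hC]⟩, fun a ⟨hfa, hga⟩ => ?_⟩
  rw [← hA a, huniq (iA a) ⟨by rw [hf, hfa], by rw [hg, hga]⟩]

namespace SimplexCategory

def collapse {N n : ℕ} (k : ℕ) (h : N ≤ n + k) : ⦋N⦌ ⟶ ⦋n⦌ :=
  mkHom ⟨fun i => ⟨i - k, by omega⟩, fun _ _ hij => Nat.sub_le_sub_right hij k⟩

def collapseSection {n N : ℕ} (c k : ℕ) (hc : c ≤ k) (h : n + k ≤ N) : ⦋n⦌ ⟶ ⦋N⦌ :=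
  mkHom ⟨fun i => ⟨if (i : ℕ) = 0 then c else k + i, by split <;> omega⟩, fun i j hij =>
    Fin.mk_le_mk.mpr (by have := Fin.le_def.mp hij; split_ifs <;> omega)⟩

@[simp] lemma collapse_apply {N n k : ℕ} (h : N ≤ n + k) (i : Fin (N + 1)) :
    ((collapse k h).toOrderHom i : ℕ) = i - k := rfl

@[simp] lemma collapseSection_apply {n N c k : ℕ} (hc : c ≤ k) (h : n + k ≤ N)
    (i : Fin (n + 1)) :
    ((collapseSection c k hc h).toOrderHom i : ℕ) = if (i : ℕ) = 0 then c else k + i := rfl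

lemma δ_apply {n : ℕ} (i : Fin (n + 2)) (j : Fin (n + 1)) :
    ((δ i).toOrderHom j : ℕ) = if (j : ℕ) < i then (j : ℕ) else (j : ℕ) + 1 := by
  change (i.succAbove j : ℕ) = _
  split_ifs with h
  · rw [Fin.succAbove_of_castSucc_lt _ _ h]; rfl
  · have hle : i ≤ j.castSucc := Fin.le_def.mpr (by rw [Fin.val_castSucc]; omega)
    rw [Fin.succAbove_of_le_castSucc _ _ hle]; rfl

lemma collapseSection_comp_collapse {n N c k : ℕ} (hc : c ≤ k) (h : n + k ≤ N)
    (h' : N ≤ n + k) : collapseSection c k hc h ≫ collapse k h' = 𝟙 _ := by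
  ext i
  simp only [comp_toOrderHom, OrderHom.comp_coe, Function.comp_apply, collapse_apply,
    collapseSection_apply, id_toOrderHom, OrderHom.id_coe, id_eq]
  split_ifs <;> omega

/- The faces `d_{n+1} ∘ d_{n+2}` and `d_0 ∘ d_{2n+3}` of `X_{2n+3}` are the first and last faces
of `(sd X)_{n+1}`; the faces `d_1` and `d_{n+2}` of `X_{n+2}` those of `(dec⊥ X)_{n+1}`. -/

lemma δ_comp_δ_comp_collapse (n : ℕ) :
    δ (⟨n + 1, by omega⟩ : Fin (2 * n + 3)) ≫ δ (⟨n + 2, by omega⟩ : Fin (2 * n + 4)) ≫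
      collapse (n + 1) (by omega) = collapse n (by omega) ≫ δ (1 : Fin (n + 3)) := by
  ext i
  simp only [comp_toOrderHom, OrderHom.comp_coe, Function.comp_apply, collapse_apply, δ_apply,
    Fin.val_one]
  grind

lemma δ_zero_comp_δ_last_comp_collapse (n : ℕ) :
    δ (0 : Fin (2 * n + 3)) ≫ δ (Fin.last (2 * n + 3)) ≫ collapse (n + 1) (by omega) =
      collapse n (by omega) ≫ δ (Fin.last (n + 2)) := by
  ext i
  simp only [comp_toOrderHom, OrderHom.comp_coe, Function.comp_apply, collapse_apply, δ_apply,
    Fin.val_zero, Fin.val_last]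
  grind

lemma δ_one_comp_collapseSection (m : ℕ) :
    δ (1 : Fin (m + 4)) ≫ collapseSection 1 (m + 2) (by omega) (by omega) =
      collapseSection 1 (m + 1) (by omega) (by omega) ≫
        δ (⟨m + 2, by omega⟩ : Fin (2 * m + 5)) ≫ δ (⟨m + 3, by omega⟩ : Fin (2 * m + 6)) := by
  ext i
  simp only [comp_toOrderHom, OrderHom.comp_coe, Function.comp_apply, collapseSection_apply,
    δ_apply, Fin.val_one]
  grind

lemma δ_last_comp_collapseSection (m : ℕ) :
    δ (Fin.last (m + 3)) ≫ collapseSection 1 (m + 2) (by omega) (by omega) =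
      collapseSection 0 (m + 1) (by omega) (by omega) ≫ δ (0 : Fin (2 * m + 5)) ≫
        δ (Fin.last (2 * m + 5)) := by
  ext i
  simp only [comp_toOrderHom, OrderHom.comp_coe, Function.comp_apply, collapseSection_apply,
    δ_apply, Fin.val_zero, Fin.val_last]
  grind

end SimplexCategory

namespace SSet

open Opposite

variable (X : SSet.{u}) {a b c d e : SimplexCategory}

lemma map_map_map_eq_map_map {f₁ : a ⟶ b} {f₂ : b ⟶ c} {f₃ : c ⟶ d} {g₁ : a ⟶ e}
    {g₂ : e ⟶ d} (H : f₁ ≫ f₂ ≫ f₃ = g₁ ≫ g₂) (x : X.obj (op d)) :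
    X.map f₁.op (X.map f₂.op (X.map f₃.op x)) = X.map g₁.op (X.map g₂.op x) := by
  simp only [← Functor.map_comp_apply, ← op_comp, H]

lemma map_map_eq_self {f : a ⟶ b} {g : b ⟶ a} (H : f ≫ g = 𝟙 a) (x : X.obj (op a)) :
    X.map f.op (X.map g.op x) = x := by
  rw [← Functor.map_comp_apply, ← op_comp, H, op_id, Functor.map_id_apply]

end SSet

open SimplexCategory

/-- If the edgewise subdivision `sd X` of a simplicial set `X` is Segal, then the lower
décalage `dec⊥ X` is Segal. -/
theorem sdSegal_implies_lowerDecSegal (X : SSet.{u}) (h : SdSegal X) : LowerDecSegal X :=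
  fun m => (h m).of_retract
    (fun x => X.map_map_map_eq_map_map (δ_comp_δ_comp_collapse (m + 1)) x)
    (fun x => X.map_map_map_eq_map_map (δ_zero_comp_δ_last_comp_collapse (m + 1)) x)
    (fun x => X.map_map_map_eq_map_map (δ_zero_comp_δ_last_comp_collapse m) x)
    (fun x => X.map_map_map_eq_map_map (δ_comp_δ_comp_collapse m) x)
    (fun x => (X.map_map_map_eq_map_map (δ_one_comp_collapseSection m).symm x).symm)
    (fun x => (X.map_map_map_eq_map_map (δ_last_comp_collapseSection m).symm x).symm)
    (X.map_map_eq_self (collapseSection_comp_collapse _ _ _))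
    (X.map_map_eq_self (collapseSection_comp_collapse _ _ _))
    (X.map_map_eq_self (collapseSection_comp_collapse _ _ _))
    (X.map_map_eq_self (collapseSection_comp_collapse m.zero_le (by omega) (by omega)))
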